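/- arXiv:1206.3182 — 3 statements merged into one kernel-verified Lean document; each statement's English description precedes it below -/
import Mathlib

section
/- Let α be a transition independent of every transition γ₀,…,γ_{m-1}. If α is enabled in s₀ and s₀ →γ₀ s₁ →⋯→γ_{m-1} s_m →α t is a path, then there is a path s₀ →α s₀' →γ₀ s₁' →⋯→γ_{m-1} t (i.e., executing α first and then γ₀,…,γ_{m-1} reaches the same state t). -/
namespace POR

variable {S : Type}

def Enabledf (α : S → Option S) (s : S) : Prop := (α s).isSome

def IndepAt (α β : S → Option S) (s : S) : Prop :=
  (Enabledf α s → (Enabledf β s ↔ ∃ s', α s = some s' ∧ Enabledf β s')) ∧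
  (Enabledf β s → (Enabledf α s ↔ ∃ s', β s = some s' ∧ Enabledf α s')) ∧
  (Enabledf α s → Enabledf β s → (α s).bind β = (β s).bind α)

def Indep (α β : S → Option S) : Prop := ∀ s, IndepAt α β s

theorem enabledf_of_eq_some {α : S → Option S} {s t : S} (h : α s = some t) :
    Enabledf α s := by
  simp [Enabledf, h]

/-- Enabledness of `α` is reflected back along `β`, and then the two steps commute. -/
theorem IndepAt.exists_swap {α β : S → Option S} {s s₁ t : S} (h : IndepAt α β s)
    (hβ : β s = some s₁) (hα : α s₁ = some t) :
    ∃ s', α s = some s' ∧ β s' = some t := by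
  obtain ⟨-, hreflect, hcomm⟩ := h
  have hβen := enabledf_of_eq_some hβ
  obtain ⟨s', hs'⟩ := Option.isSome_iff_exists.mp <|
    (hreflect hβen).mpr ⟨s₁, hβ, enabledf_of_eq_some hα⟩
  refine ⟨s', hs', ?_⟩
  simpa [hs', hβ, hα] using hcomm (enabledf_of_eq_some hs') hβen

theorem indep_commute_path_general (α : S → Option S) (m : ℕ)
    (st : ℕ → S) (tr : ℕ → S → Option S) (t : S)
    (hind : ∀ i < m, Indep α (tr i))
    (hpath : ∀ i < m, tr i (st i) = some (st (i + 1)))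
    (hlast : α (st m) = some t) :
    ∃ st' : ℕ → S, α (st 0) = some (st' 0) ∧
      (∀ i < m, tr i (st' i) = some (st' (i + 1))) ∧ st' m = t := by
  induction m generalizing st tr with
  | zero => exact ⟨fun _ => t, hlast, by simp, rfl⟩
  | succ m ih =>
    obtain ⟨st', hα, hpath', hend⟩ := ih (fun i => st (i + 1)) (fun i => tr (i + 1))
      (fun i hi => hind (i + 1) (by omega)) (fun i hi => hpath (i + 1) (by omega)) hlast
    obtain ⟨s', hs', htr⟩ :=
      (hind 0 m.succ_pos (st 0)).exists_swap (hpath 0 m.succ_pos) hα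
    refine ⟨fun | 0 => s' | i + 1 => st' i, hs', ?_, hend⟩
    rintro (_ | i) hi
    · exact htr
    · exact hpath' i (by omega)

/-- α independent of γ₀,…,γ_{m-1}, enabled in s₀, and executed at
the end of the path s₀ →γ₀ ⋯ →γ_{m-1} s_m →α t, can be executed first and then
γ₀,…,γ_{m-1} reach the same state t. -/
theorem indep_commute_path (α : S → Option S) (m : ℕ)
    (st : ℕ → S) (tr : ℕ → S → Option S) (t : S)
    (hind : ∀ i < m, Indep α (tr i))
    (hen : Enabledf α (st 0))
    (hpath : ∀ i < m, tr i (st i) = some (st (i + 1)))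
    (hlast : α (st m) = some t) :
    ∃ st' : ℕ → S, α (st 0) = some (st' 0) ∧
      (∀ i < m, tr i (st' i) = some (st' (i + 1))) ∧ st' m = t :=
  indep_commute_path_general α m st tr t hind hpath hlast

end POR
end

section
/- Let s₀ be a state from which there is a path of length 1 leading to an error state (i.e., some error transition α ∈ T_err is enabled in s₀). Assume every state has a nonempty persistent set whenever it has enabled transitions (successor-state condition), the state set is finite, and the cycle condition holds. Then there is a finite path from s₀ to an error state consisting only of transitions in the persistent sets of the visited states. -/
/-!
Keep taking reduced steps while the error transition `α` stays enabled and outside the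
persistent set. Persistence of `P s` applied to the one-step path `α` makes `α` independent
of every `β ∈ P s`, so `α` is still enabled after `β`, and `P s` is nonempty by the
successor-state condition. In a finite state space such a walk closes a cycle, on which the
cycle condition puts `α` into some persistent set; from there `α` itself leads to an error.
-/

namespace POR

variable {S : Type}

/-- The set of states reachable from `S0` by finite paths of transitions in `T`. -/
def ReachFrom (S0 : Set S) (T : Set (S → Option S)) : Set S :=
  {s | ∃ (n : ℕ) (st : ℕ → S) (tr : ℕ → S → Option S),
    st 0 ∈ S0 ∧ st n = s ∧
    ∀ i < n, tr i ∈ T ∧ tr i (st i) = some (st (i + 1))}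

/-- The set of states reachable from `S0` under the reduced exploration that in each
visited state only takes transitions from its persistent set `P`. -/
def ReachRed (S0 : Set S) (T : Set (S → Option S))
    (P : S → Set (S → Option S)) : Set S :=
  {s | ∃ (n : ℕ) (st : ℕ → S) (tr : ℕ → S → Option S),
    st 0 ∈ S0 ∧ st n = s ∧
    ∀ i < n, tr i ∈ T ∧ tr i ∈ P (st i) ∧ tr i (st i) = some (st (i + 1))}

/-- Error states with respect to a set of error transitions. -/
def Err (Terr : Set (S → Option S)) : Set S :=
  {s | ∃ (s' : S) (α : S → Option S), α ∈ Terr ∧ α s' = some s}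


/-- `P` is persistent in `s`: every finite nonempty path from `s` using only
transitions outside `P` has its last transition independent in its source state
of every transition in `P`. -/
def PersistentIn (P : Set (S → Option S)) (s : S) : Prop :=
  (∀ α ∈ P, Enabledf α s) ∧
  ∀ (n : ℕ) (st : ℕ → S) (tr : ℕ → S → Option S),
    st 0 = s →
    (∀ i ≤ n, tr i ∉ P) →
    (∀ i < n, tr i (st i) = some (st (i + 1))) →
    Enabledf (tr n) (st n) →
    ∀ β ∈ P, IndepAt (tr n) β (st n)

/-- Cycle condition: on any cycle taken under the reduced exploration, any
transition enabled at some state on the cycle belongs to the persistent set of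
some state on the cycle. -/
def CycleCond (T : Set (S → Option S)) (P : S → Set (S → Option S)) : Prop :=
  ∀ (n : ℕ) (st : ℕ → S) (tr : ℕ → S → Option S),
    0 < n → st n = st 0 →
    (∀ i < n, tr i ∈ T ∧ tr i ∈ P (st i) ∧ tr i (st i) = some (st (i + 1))) →
    ∀ α ∈ T, (∃ j < n, Enabledf α (st j)) → ∃ k < n, α ∈ P (st k)

theorem exists_seq_of_forall_exists_rel {α : Type*} {s : Set α} {r : α → α → Prop}
    (h : ∀ a ∈ s, ∃ b ∈ s, r a b) {a₀ : α} (ha₀ : a₀ ∈ s) :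
    ∃ f : ℕ → α, f 0 = a₀ ∧ ∀ n, f n ∈ s ∧ r (f n) (f (n + 1)) := by
  choose g hgs hgr using h
  let next : s → s := fun a => ⟨g a a.2, hgs a a.2⟩
  refine ⟨fun n => (next^[n] ⟨a₀, ha₀⟩).1, rfl, fun n => ⟨Subtype.prop _, ?_⟩⟩
  show r (next^[n] _).1 (next^[n + 1] _).1
  rw [Function.iterate_succ_apply']
  exact hgr _ _

def RedStep (T : Set (S → Option S)) (P : S → Set (S → Option S)) (a b : S) : Prop :=
  ∃ β ∈ T, β ∈ P a ∧ β a = some b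

theorem exists_path_of_reflTransGen_redStep {T : Set (S → Option S)}
    {P : S → Set (S → Option S)} {a b : S} (h : Relation.ReflTransGen (RedStep T P) a b) :
    ∃ (n : ℕ) (st : ℕ → S) (tr : ℕ → S → Option S), st 0 = a ∧ st n = b ∧
      ∀ i < n, tr i ∈ T ∧ tr i ∈ P (st i) ∧ tr i (st i) = some (st (i + 1)) := by
  induction h using Relation.ReflTransGen.head_induction_on with
  | refl => exact ⟨0, fun _ => b, fun _ _ => none, rfl, rfl, by omega⟩
  | @head a c hac _ ih =>
    obtain ⟨β, hβT, hβP, hβa⟩ := hac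
    obtain ⟨n, st, tr, h0, hn, hpath⟩ := ih
    refine ⟨n + 1, fun i => Nat.casesOn i a st, fun i => Nat.casesOn i β tr, rfl, hn, ?_⟩
    rintro (_ | i) hi
    · exact ⟨hβT, hβP, show β a = some (st 0) from h0 ▸ hβa⟩
    · exact hpath i (by omega)

theorem PersistentIn.exists_apply_eq_some_enabledf {P : Set (S → Option S)} {s : S}
    (hpers : PersistentIn P s) {α β : S → Option S} (hα : Enabledf α s) (hαP : α ∉ P)
    (hβ : β ∈ P) : ∃ s', β s = some s' ∧ Enabledf α s' := by
  have hind : IndepAt α β s :=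
    hpers.2 0 (fun _ => s) (fun _ => α) rfl (fun _ _ => hαP) (by omega) hα β hβ
  exact (hind.2.1 (hpers.1 β hβ)).mp hα

theorem nonempty_of_enabledf {T P : Set (S → Option S)} {s : S}
    (hsucc : P = ∅ → {α | α ∈ T ∧ Enabledf α s} = ∅) {α : S → Option S}
    (hαT : α ∈ T) (hα : Enabledf α s) : P.Nonempty :=
  Set.nonempty_iff_ne_empty.mpr fun hP =>
    Set.eq_empty_iff_forall_notMem.mp (hsucc hP) α ⟨hαT, hα⟩

theorem CycleCond.exists_mem_of_seq [Finite S] {T : Set (S → Option S)}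
    {P : S → Set (S → Option S)} (hcycle : CycleCond T P) {st : ℕ → S}
    (hstep : ∀ n, RedStep T P (st n) (st (n + 1))) {α : S → Option S} (hαT : α ∈ T)
    (hα : ∀ n, Enabledf α (st n)) : ∃ n, α ∈ P (st n) := by
  obtain ⟨i, j, hij, hst⟩ := Finite.exists_ne_map_eq_of_infinite st
  wlog hlt : i < j generalizing i j
  · exact this j i hij.symm hst.symm (by omega)
  choose tr htrT htrP htr using hstep
  obtain ⟨k, -, hk⟩ := hcycle (j - i) (fun k => st (i + k)) (fun k => tr (i + k)) (by omega)
    (by simp [Nat.add_sub_cancel' hlt.le, hst]) (fun k _ => ⟨htrT _, htrP _, htr _⟩)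
    α hαT ⟨0, by omega, hα _⟩
  exact ⟨i + k, hk⟩

theorem exists_reachable_mem_persistent [Finite S] {T : Set (S → Option S)}
    {P : S → Set (S → Option S)} (hPsub : ∀ s, P s ⊆ T)
    (hPpers : ∀ s, PersistentIn (P s) s)
    (hsucc : ∀ s, P s = ∅ → {α | α ∈ T ∧ Enabledf α s} = ∅)
    (hcycle : CycleCond T P) {s₀ : S} {α : S → Option S} (hαT : α ∈ T)
    (hen : Enabledf α s₀) :
    ∃ s, Relation.ReflTransGen (RedStep T P) s₀ s ∧ Enabledf α s ∧ α ∈ P s := by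
  by_contra! hcon
  let good : Set S := {s | Relation.ReflTransGen (RedStep T P) s₀ s ∧ Enabledf α s}
  have hstep : ∀ s ∈ good, ∃ s' ∈ good, RedStep T P s s' := by
    rintro s ⟨hreach, hαs⟩
    obtain ⟨β, hβ⟩ := nonempty_of_enabledf (hsucc s) hαT hαs
    obtain ⟨s', hβs, hαs'⟩ :=
      (hPpers s).exists_apply_eq_some_enabledf hαs (hcon s hreach hαs) hβ
    have hred : RedStep T P s s' := ⟨β, hPsub s hβ, hβ, hβs⟩
    exact ⟨s', ⟨hreach.tail hred, hαs'⟩, hred⟩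
  obtain ⟨st, h0, hst⟩ := exists_seq_of_forall_exists_rel hstep
    (show s₀ ∈ good from ⟨.refl, hen⟩)
  obtain ⟨n, hn⟩ :=
    hcycle.exists_mem_of_seq (fun n => (hst n).2) hαT (fun n => (hst n).1.2)
  exact hcon _ (hst n).1.1 (hst n).1.2 hn

/-- if an error transition is enabled in s₀ (a path of length 1 to an
error state), then under the successor-state condition, finiteness, and the cycle
condition there is a path from s₀ to an error state using only transitions in the
persistent sets of the visited states. -/
theorem error_reachable_reduced [Finite S]
    (T Terr : Set (S → Option S)) (P : S → Set (S → Option S))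
    (hTerr : Terr ⊆ T)
    (hPsub : ∀ s, P s ⊆ T)
    (hPpers : ∀ s, PersistentIn (P s) s)
    (hsucc : ∀ s, P s = ∅ ↔ {α | α ∈ T ∧ Enabledf α s} = ∅)
    (hcycle : CycleCond T P)
    (s₀ : S) (α : S → Option S) (hα : α ∈ Terr) (hen : Enabledf α s₀) :
    ∃ (n : ℕ) (st : ℕ → S) (tr : ℕ → S → Option S),
      st 0 = s₀ ∧
      (∀ i < n, tr i ∈ T ∧ tr i ∈ P (st i) ∧ tr i (st i) = some (st (i + 1))) ∧
      st n ∈ Err Terr := by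
  obtain ⟨s, hreach, hαs, hαP⟩ :=
    exists_reachable_mem_persistent hPsub hPpers (fun s => (hsucc s).mp) hcycle (hTerr hα) hen
  obtain ⟨t, hst⟩ := Option.isSome_iff_exists.mp hαs
  obtain ⟨n, st, tr, h0, hn, hpath⟩ :=
    exists_path_of_reflTransGen_redStep (hreach.tail ⟨α, hTerr hα, hαP, hst⟩)
  exact ⟨n, st, tr, h0, hpath, hn ▸ ⟨s, α, hα, hst⟩⟩

end POR
end

section
/- If a transition α not in the persistent set P(s) of a state s is enabled in s, and s →γ₀ s₁ →γ₁ ⋯ →γ_{m-1} s_m is a path where each γᵢ ∈ P(sᵢ) and α ∉ P(sᵢ) for all i < m, and each P(sᵢ) is persistent in sᵢ, then α remains enabled in s_m. -/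
/-! Persistence of `P(sᵢ)`, applied to the one-transition path `α`, makes `α` independent at `sᵢ`
of `γᵢ ∈ P(sᵢ)`; enabledness preservation then carries `α` from `sᵢ` to `sᵢ₊₁`, and induction
along the path finishes. -/

namespace POR

variable {S : Type}

theorem PersistentIn.indepAt_of_notMem {P : Set (S → Option S)} {s : S}
    (hP : PersistentIn P s) {α : S → Option S} (hα : α ∉ P) (hen : Enabledf α s)
    {β : S → Option S} (hβ : β ∈ P) : IndepAt α β s :=
  hP.2 0 (fun _ => s) (fun _ => α) rfl (fun _ _ => hα) (fun _ h => absurd h (Nat.not_lt_zero _))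
    hen β hβ

theorem PersistentIn.enabledf_of_step {P : Set (S → Option S)} {s s' : S}
    (hP : PersistentIn P s) {α : S → Option S} (hα : α ∉ P) (hen : Enabledf α s)
    {β : S → Option S} (hβ : β ∈ P) (hstep : β s = some s') : Enabledf α s' := by
  obtain ⟨-, hpres, -⟩ := hP.indepAt_of_notMem hα hen hβ
  obtain ⟨t, hβt, hαt⟩ := (hpres (hP.1 β hβ)).mp hen
  rwa [Option.some_injective _ (hstep.symm.trans hβt)]

theorem not_persistent_stays_enabled_general (P : S → Set (S → Option S))
    (α : S → Option S) (m : ℕ) (st : ℕ → S) (tr : ℕ → S → Option S)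
    (hPpers : ∀ i < m, PersistentIn (P (st i)) (st i))
    (hnot : ∀ i < m, α ∉ P (st i))
    (hen : Enabledf α (st 0))
    (htr : ∀ i < m, tr i ∈ P (st i))
    (hpath : ∀ i < m, tr i (st i) = some (st (i + 1))) :
    Enabledf α (st m) := by
  suffices ∀ i ≤ m, Enabledf α (st i) from this m le_rfl
  intro i hi
  induction i with
  | zero => exact hen
  | succ i ih =>
    have hi' : i < m := hi
    exact (hPpers i hi').enabledf_of_step (hnot i hi') (ih hi'.le) (htr i hi') (hpath i hi')

/-- a transition enabled in  but not in the persistent set of any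
state along a reduced path that avoids it remains enabled at the end of the path. -/
theorem not_persistent_stays_enabled (P : S → Set (S → Option S))
    (α : S → Option S) (m : ℕ) (st : ℕ → S) (tr : ℕ → S → Option S)
    (hPpers : ∀ i < m, PersistentIn (P (st i)) (st i))
    (hnot : ∀ i < m, α ∉ P (st i))
    (hnot0 : α ∉ P (st 0))
    (hen : Enabledf α (st 0))
    (htr : ∀ i < m, tr i ∈ P (st i))
    (hpath : ∀ i < m, tr i (st i) = some (st (i + 1))) :
    Enabledf α (st m) :=
  not_persistent_stays_enabled_general P α m st tr hPpers hnot hen htr hpath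

end POR
end
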